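/- Let f₁, …, f_N : ℝⁿ → ℝ be continuously differentiable, fix β ∈ (−1, 1), γ ∈ ℝ, δ > 0, let r > 0, and let X₀, X₁ ⊆ B(0, r/2) be compact sets, where B(0, s) is the closed ball of radius s centered at the origin. Then there exist T > 0 and ᾱ ∈ (0, T/2] such that for every α ∈ (0, ᾱ], every k̄ ∈ ℕ, and every random-reshuffling-with-momentum trajectory of f₁, …, f_N with step size α and parameters β, γ, δ whose outer iterates satisfy x₀, …, x_{k̄} ∈ X₁ and x_{k̄} ∈ X₀, one has x_{k,i} ∈ B(0, r) for all k ∈ {k̄, …, k̄ + ⌊T/α⌋} and i ∈ {0, …, N}, and y_{k,i} ∈ B(0, r) for all such k and i ∈ {1, …, N}. (Intermediate claim established in the proof of the paper's Proposition 4.1, in the continuously differentiable case.) -/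

import Mathlib

/-!
The gradients are bounded by some `M` on `B(0, r)`. While the extrapolated points stay in that
ball, consecutive increments `d = x_{k,i} - x_{k,i-1}` satisfy `‖d'‖ ≤ |β| ‖d‖ + α M`, so with
`C ≥ δ` and `|β| C + M ≤ C` the bound `‖d‖ ≤ α C` holds initially and survives every step.
Hence one epoch moves the iterate by at most `N α C`. Up to epoch `k̄` the epoch starts lie in
`X₁ ⊆ B(0, r/2)`; during the next `⌊T/α⌋` epochs they drift by at most `T N C ≤ r/4`, and the
points inside an epoch and the extrapolated points by a further `(N + |γ|) α C ≤ r/8`.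
-/

/-- A random-reshuffling-with-momentum trajectory of `f 0, …, f (N-1)` with step size `α`
and parameters `β, γ, δ`.  Here `x k j` represents the point `x_{k,j}` of the paper for
`j ∈ {-1, 0, …, N}`, with `x_{k,-1} = x_{k-1,N-1}` (and `x 0 (-1)` playing the role of the
extra initial point `x_{-1,N-1}`), `x_{k+1,0} = x_{k,N}`, `‖x_{-1,N-1} - x₀‖ ≤ δα`, and
for every `k` there is a permutation `σᵏ` such that for every `i ∈ {0, …, N-1}` (the
paper's index `i+1 ∈ {1, …, N}`):
`x_{k,i+1} = x_{k,i} + β (x_{k,i} - x_{k,i-1}) - α ∇f_{σᵏ(i)}(y_{k,i+1})` where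
`y_{k,i+1} = x_{k,i} + γ (x_{k,i} - x_{k,i-1})`. -/
def IsRRMTraj {n N : ℕ} (f : Fin N → EuclideanSpace ℝ (Fin n) → ℝ) (α β γ δ : ℝ)
    (x : ℕ → ℤ → EuclideanSpace ℝ (Fin n)) : Prop :=
  ‖x 0 (-1) - x 0 0‖ ≤ δ * α ∧
  (∀ k : ℕ, x (k + 1) (-1) = x k ((N : ℤ) - 1)) ∧
  (∀ k : ℕ, x (k + 1) 0 = x k (N : ℤ)) ∧
  (∀ k : ℕ, ∃ σ : Equiv.Perm (Fin N), ∀ i : Fin N,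
    x k (((i : ℕ) : ℤ) + 1)
      = x k ((i : ℕ) : ℤ) + β • (x k ((i : ℕ) : ℤ) - x k (((i : ℕ) : ℤ) - 1))
        - α • gradient (f (σ i))
            (x k ((i : ℕ) : ℤ) + γ • (x k ((i : ℕ) : ℤ) - x k (((i : ℕ) : ℤ) - 1))))

theorem exists_pos_bound_gradient_of_contDiff {E ι : Type*} [NormedAddCommGroup E]
    [InnerProductSpace ℝ E] [CompleteSpace E] [ProperSpace E] [Finite ι] {f : ι → E → ℝ}
    (hf : ∀ i, ContDiff ℝ 1 (f i)) (r : ℝ) :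
    ∃ M > 0, ∀ i z, ‖z‖ ≤ r → ‖gradient (f i) z‖ ≤ M := by
  have hcont (i : ι) : Continuous (gradient (f i)) :=
    (InnerProductSpace.toDual ℝ E).symm.continuous.comp ((hf i).continuous_fderiv one_ne_zero)
  have hK : IsCompact (⋃ i, gradient (f i) '' Metric.closedBall 0 r) :=
    isCompact_iUnion fun i => (isCompact_closedBall 0 r).image (hcont i)
  obtain ⟨M, hM0, hM⟩ := hK.isBounded.exists_pos_norm_le
  refine ⟨M, hM0, fun i z hz => hM _ (Set.mem_iUnion_of_mem i (Set.mem_image_of_mem _ ?_))⟩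
  rwa [mem_closedBall_zero_iff]

section MomentumIteration

variable {E : Type*} [SeminormedAddCommGroup E]

theorem norm_sub_le_mul_of_norm_succ_sub_le (u : ℤ → E) {c : ℝ} {j : ℕ}
    (h : ∀ m : ℕ, m < j → ‖u (m + 1) - u m‖ ≤ c) : ‖u j - u 0‖ ≤ j * c := by
  have := dist_le_range_sum_of_dist_le (f := fun m : ℕ => u m) (d := fun _ => c) j
    fun {m} hm => by simpa [dist_eq_norm'] using h m hm
  simpa [dist_eq_norm'] using this

variable [NormedSpace ℝ E]

theorem norm_le_of_norm_sub_smul_le {d d' : E} {α β C M : ℝ} (hα : 0 ≤ α)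
    (hC : |β| * C + M ≤ C) (hd : ‖d‖ ≤ α * C) (hd' : ‖d' - β • d‖ ≤ α * M) :
    ‖d'‖ ≤ α * C :=
  calc ‖d'‖ = ‖(d' - β • d) + β • d‖ := by rw [sub_add_cancel]
    _ ≤ α * M + |β| * (α * C) := by
      refine norm_add_le_of_le hd' ?_
      rw [norm_smul, Real.norm_eq_abs]
      exact mul_le_mul_of_nonneg_left hd (abs_nonneg β)
    _ ≤ α * C := by linarith [mul_le_mul_of_nonneg_left hC hα]

theorem norm_le_of_norm_sub_pred_le {u : ℤ → E} {c γ : ℝ} {j : ℕ}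
    (h : ∀ i : ℕ, i ≤ j → ‖u i - u (i - 1)‖ ≤ c) :
    ‖u j‖ ≤ ‖u 0‖ + j * c ∧ ‖u j + γ • (u j - u (j - 1))‖ ≤ ‖u 0‖ + (j + |γ|) * c := by
  have hdisp : ‖u j - u 0‖ ≤ j * c :=
    norm_sub_le_mul_of_norm_succ_sub_le u fun m hm => by
      simpa using h (m + 1) hm
  have hpos : ‖u j‖ ≤ ‖u 0‖ + j * c := by
    linarith [norm_le_insert' (u j) (u 0)]
  refine ⟨hpos, ?_⟩
  calc ‖u j + γ • (u j - u (j - 1))‖ ≤ ‖u j‖ + |γ| * ‖u j - u (j - 1)‖ := by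
        rw [← Real.norm_eq_abs, ← norm_smul]; exact norm_add_le _ _
    _ ≤ ‖u 0‖ + (j + |γ|) * c := by
        linarith [mul_le_mul_of_nonneg_left (h j le_rfl) (abs_nonneg γ)]

theorem norm_sub_pred_le_of_momentum {u : ℤ → E} {N : ℕ} {α β γ C M ρ : ℝ} (hα : 0 ≤ α)
    (hC : |β| * C + M ≤ C)
    (hstep : ∀ m : ℕ, m < N → ‖u m + γ • (u m - u (m - 1))‖ ≤ ρ →
      ‖(u (m + 1) - u m) - β • (u m - u (m - 1))‖ ≤ α * M)
    (h0 : ‖u 0 - u (-1)‖ ≤ α * C) (hρ : ‖u 0‖ + (N + |γ|) * (α * C) ≤ ρ) :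
    ∀ j : ℕ, j ≤ N → ‖u j - u (j - 1)‖ ≤ α * C := by
  intro j
  induction j using Nat.strong_induction_on with
  | _ j ih =>
    intro hjN
    match j with
    | 0 => simpa using h0
    | m + 1 =>
      have hmN : m < N := by omega
      have hαC : 0 ≤ α * C := (norm_nonneg _).trans h0
      have hmN' : (m : ℝ) * (α * C) ≤ N * (α * C) :=
        mul_le_mul_of_nonneg_right (by exact_mod_cast hmN.le) hαC
      have hy := (norm_le_of_norm_sub_pred_le (γ := γ) (j := m) fun i hi =>
        ih i (by omega) (by omega)).2
      simpa using norm_le_of_norm_sub_smul_le hα hC (ih m (by omega) (by omega))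
        (hstep m hmN (by linarith))

variable {x : ℕ → ℤ → E} {N kbar K : ℕ} {α β γ C M R ρ : ℝ}

theorem norm_epoch_start_le_of_momentum (hα : 0 ≤ α) (hC : |β| * C + M ≤ C)
    (hnext₀ : ∀ k : ℕ, x (k + 1) 0 = x k N) (hnext₁ : ∀ k : ℕ, x (k + 1) (-1) = x k (N - 1))
    (hinit : ‖x 0 0 - x 0 (-1)‖ ≤ α * C)
    (hstep : ∀ k m : ℕ, m < N → ‖x k m + γ • (x k m - x k (m - 1))‖ ≤ ρ →
      ‖(x k (m + 1) - x k m) - β • (x k m - x k (m - 1))‖ ≤ α * M)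
    (hstart : ∀ k ≤ kbar, ‖x k 0‖ ≤ R)
    (hρ : R + K * (N * (α * C)) + (N + |γ|) * (α * C) ≤ ρ) :
    ∀ k ≤ kbar + K, ‖x k 0‖ ≤ R + (k - kbar : ℕ) * (N * (α * C)) ∧
      ‖x k 0 - x k (-1)‖ ≤ α * C := by
  have hαC : 0 ≤ α * C := (norm_nonneg _).trans hinit
  have hNαC : 0 ≤ N * (α * C) := mul_nonneg (Nat.cast_nonneg _) hαC
  intro k
  induction k with
  | zero =>
    intro _
    exact ⟨by simpa using hstart 0 (Nat.zero_le _), hinit⟩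
  | succ k ih =>
    intro hk
    obtain ⟨hpos, hdiff⟩ := ih (by omega)
    have hkK : ((k - kbar : ℕ) : ℝ) * (N * (α * C)) ≤ K * (N * (α * C)) :=
      mul_le_mul_of_nonneg_right (by exact_mod_cast (by omega : k - kbar ≤ K)) hNαC
    have hinc := norm_sub_pred_le_of_momentum hα hC (hstep k) hdiff (by linarith)
    refine ⟨?_, by simpa [hnext₀, hnext₁] using hinc N le_rfl⟩
    by_cases hks : k + 1 ≤ kbar
    · have := mul_nonneg (Nat.cast_nonneg (k + 1 - kbar)) hNαC
      linarith [hstart (k + 1) hks]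
    · have hsucc : ((k + 1 - kbar : ℕ) : ℝ) = (k - kbar : ℕ) + 1 := by
        rw [Nat.sub_add_comm (by omega)]; push_cast; ring
      rw [hnext₀, hsucc]
      linarith [(norm_le_of_norm_sub_pred_le (γ := γ) hinc).1]

theorem norm_le_of_momentum_epochs (hα : 0 ≤ α) (hC : |β| * C + M ≤ C)
    (hnext₀ : ∀ k : ℕ, x (k + 1) 0 = x k N) (hnext₁ : ∀ k : ℕ, x (k + 1) (-1) = x k (N - 1))
    (hinit : ‖x 0 0 - x 0 (-1)‖ ≤ α * C)
    (hstep : ∀ k m : ℕ, m < N → ‖x k m + γ • (x k m - x k (m - 1))‖ ≤ ρ →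
      ‖(x k (m + 1) - x k m) - β • (x k m - x k (m - 1))‖ ≤ α * M)
    (hstart : ∀ k ≤ kbar, ‖x k 0‖ ≤ R)
    (hρ : R + K * (N * (α * C)) + (N + |γ|) * (α * C) ≤ ρ) {k : ℕ} (hk : k ≤ kbar + K)
    {j : ℕ} (hj : j ≤ N) :
    ‖x k j‖ ≤ ρ ∧ ‖x k j + γ • (x k j - x k (j - 1))‖ ≤ ρ := by
  have hαC : 0 ≤ α * C := (norm_nonneg _).trans hinit
  obtain ⟨hpos, hdiff⟩ :=
    norm_epoch_start_le_of_momentum hα hC hnext₀ hnext₁ hinit hstep hstart hρ k hk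
  have hkK : ((k - kbar : ℕ) : ℝ) * (N * (α * C)) ≤ K * (N * (α * C)) :=
    mul_le_mul_of_nonneg_right (by exact_mod_cast (by omega : k - kbar ≤ K))
      (mul_nonneg (Nat.cast_nonneg _) hαC)
  have hinc := norm_sub_pred_le_of_momentum hα hC (hstep k) hdiff (by linarith)
  have hjN : (j : ℝ) * (α * C) ≤ N * (α * C) :=
    mul_le_mul_of_nonneg_right (by exact_mod_cast hj) hαC
  have hγ := mul_nonneg (abs_nonneg γ) hαC
  obtain ⟨hxj, hyj⟩ := norm_le_of_norm_sub_pred_le (γ := γ) fun i hi => hinc i (hi.trans hj)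
  constructor <;> linarith

end MomentumIteration

theorem IsRRMTraj.norm_sub_momentum_le {n N : ℕ} {f : Fin N → EuclideanSpace ℝ (Fin n) → ℝ}
    {α β γ δ ρ M : ℝ} {x : ℕ → ℤ → EuclideanSpace ℝ (Fin n)} (hx : IsRRMTraj f α β γ δ x)
    (hα : 0 ≤ α) (hM : ∀ i z, ‖z‖ ≤ ρ → ‖gradient (f i) z‖ ≤ M) (k m : ℕ) (hm : m < N)
    (hy : ‖x k m + γ • (x k m - x k (m - 1))‖ ≤ ρ) :
    ‖(x k (m + 1) - x k m) - β • (x k m - x k (m - 1))‖ ≤ α * M := by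
  obtain ⟨σ, hσ⟩ := hx.2.2.2 k
  have hrec := hσ ⟨m, hm⟩
  simp only at hrec
  rw [hrec, show ∀ a b c : EuclideanSpace ℝ (Fin n), a + b - c - a - b = -c by intros; abel,
    norm_neg, norm_smul, Real.norm_of_nonneg hα]
  exact mul_le_mul_of_nonneg_left (hM _ _ hy) hα

theorem exists_abs_mul_add_le_self {β : ℝ} (hβ : |β| < 1) (M δ : ℝ) (hM : 0 < M) :
    ∃ C, δ ≤ C ∧ 0 < C ∧ |β| * C + M ≤ C := by
  refine ⟨max δ (M / (1 - |β|)), le_max_left _ _,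
    (div_pos hM (sub_pos.2 hβ)).trans_le (le_max_right _ _), ?_⟩
  have h := le_max_right δ (M / (1 - |β|))
  rw [div_le_iff₀ (sub_pos.2 hβ)] at h
  linarith

theorem stmt_10_general {n N : ℕ} (f : Fin N → EuclideanSpace ℝ (Fin n) → ℝ)
    (hf : ∀ i, ContDiff ℝ 1 (f i))
    (β γ δ : ℝ) (hβ : β ∈ Set.Ioo (-1 : ℝ) 1)
    (r : ℝ) (hr : 0 < r)
    (X₀ X₁ : Set (EuclideanSpace ℝ (Fin n)))
    (hX₁b : X₁ ⊆ Metric.closedBall 0 (r / 2)) :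
    ∃ T ᾱ : ℝ, 0 < T ∧ 0 < ᾱ ∧ ᾱ ≤ T / 2 ∧
      ∀ α : ℝ, 0 < α → α ≤ ᾱ → ∀ kbar : ℕ,
        ∀ x : ℕ → ℤ → EuclideanSpace ℝ (Fin n), IsRRMTraj f α β γ δ x →
          (∀ k : ℕ, k ≤ kbar → x k 0 ∈ X₁) → x kbar 0 ∈ X₀ →
          ∀ k : ℕ, kbar ≤ k → k ≤ kbar + ⌊T / α⌋₊ →
            (∀ i : ℤ, 0 ≤ i → i ≤ (N : ℤ) → x k i ∈ Metric.closedBall (0 : EuclideanSpace ℝ (Fin n)) r) ∧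
            (∀ i : Fin N,
              x k ((i : ℕ) : ℤ) + γ • (x k ((i : ℕ) : ℤ) - x k (((i : ℕ) : ℤ) - 1))
                ∈ Metric.closedBall (0 : EuclideanSpace ℝ (Fin n)) r) := by
  obtain ⟨M, hM0, hM⟩ := exists_pos_bound_gradient_of_contDiff hf r
  obtain ⟨C, hδC, hC0, hC⟩ := exists_abs_mul_add_le_self (abs_lt.2 hβ) M δ hM0
  set L := (N + |γ| + 1) * C
  have hL : 0 < L := by positivity
  refine ⟨r / (4 * L), r / (4 * L) / 2, by positivity, by positivity, le_rfl, ?_⟩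
  intro α hα hαᾱ kbar x hx hX₁ _ k _ hk
  have hinit : ‖x 0 0 - x 0 (-1)‖ ≤ α * C := by
    rw [norm_sub_rev, mul_comm]
    exact hx.1.trans (mul_le_mul_of_nonneg_right hδC hα.le)
  have hfit : r / 2 + ⌊r / (4 * L) / α⌋₊ * (N * (α * C)) + (N + |γ|) * (α * C) ≤ r := by
    have hK : ⌊r / (4 * L) / α⌋₊ * α ≤ r / (4 * L) :=
      (le_div_iff₀ hα).1 (Nat.floor_le (by positivity))
    have hLC : (N : ℝ) * C ≤ L := by nlinarith [abs_nonneg γ]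
    calc r / 2 + ⌊r / (4 * L) / α⌋₊ * (N * (α * C)) + (N + |γ|) * (α * C)
        = r / 2 + (⌊r / (4 * L) / α⌋₊ * α) * (N * C) + α * ((N + |γ|) * C) := by ring
      _ ≤ r / 2 + r / (4 * L) * L + r / (4 * L) / 2 * L := by
        gcongr
        nlinarith
      _ = 7 / 8 * r := by field_simp; ring
      _ ≤ r := by linarith
  have hbound {j : ℕ} (hj : j ≤ N) :=
    norm_le_of_momentum_epochs hα.le hC hx.2.2.1 hx.2.1 hinit (hx.norm_sub_momentum_le hα.le hM)
      (fun k hk => mem_closedBall_zero_iff.1 (hX₁b (hX₁ k hk))) hfit hk hj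
  refine ⟨fun i hi₀ hiN => ?_, fun i => mem_closedBall_zero_iff.2 (hbound i.isLt.le).2⟩
  lift i to ℕ using hi₀
  exact mem_closedBall_zero_iff.2 (hbound (by exact_mod_cast hiN)).1

theorem stmt_10 {n N : ℕ} (hN : 1 ≤ N) (f : Fin N → EuclideanSpace ℝ (Fin n) → ℝ)
    (hf : ∀ i, ContDiff ℝ 1 (f i))
    (β γ δ : ℝ) (hβ : β ∈ Set.Ioo (-1 : ℝ) 1) (hδ : 0 < δ)
    (r : ℝ) (hr : 0 < r)
    (X₀ X₁ : Set (EuclideanSpace ℝ (Fin n))) (hX₀ : IsCompact X₀) (hX₁ : IsCompact X₁)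
    (hX₀b : X₀ ⊆ Metric.closedBall 0 (r / 2)) (hX₁b : X₁ ⊆ Metric.closedBall 0 (r / 2)) :
    ∃ T ᾱ : ℝ, 0 < T ∧ 0 < ᾱ ∧ ᾱ ≤ T / 2 ∧
      ∀ α : ℝ, 0 < α → α ≤ ᾱ → ∀ kbar : ℕ,
        ∀ x : ℕ → ℤ → EuclideanSpace ℝ (Fin n), IsRRMTraj f α β γ δ x →
          (∀ k : ℕ, k ≤ kbar → x k 0 ∈ X₁) → x kbar 0 ∈ X₀ →
          ∀ k : ℕ, kbar ≤ k → k ≤ kbar + ⌊T / α⌋₊ →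
            (∀ i : ℤ, 0 ≤ i → i ≤ (N : ℤ) → x k i ∈ Metric.closedBall (0 : EuclideanSpace ℝ (Fin n)) r) ∧
            (∀ i : Fin N,
              x k ((i : ℕ) : ℤ) + γ • (x k ((i : ℕ) : ℤ) - x k (((i : ℕ) : ℤ) - 1))
                ∈ Metric.closedBall (0 : EuclideanSpace ℝ (Fin n)) r) :=
  stmt_10_general f hf β γ δ hβ r hr X₀ X₁ hX₁b
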